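/- arXiv:2602.20935 — 2 statements merged into one kernel-verified Lean document; each statement's English description precedes it below -/
import Mathlib

section
/- Fix d ≥ 2 and h > 0. Define G(x) = σ(tanh(x)/tanh(h)) cosh^{d-1}(x) for 0 ≤ x ≤ h, where σ(u) = (Γ(d/2)/(√π Γ((d-1)/2))) ∫_u^1 (1-s²)^{(d-3)/2} ds. Then d/dh ∫₀^h G(x) dx = Γ(d/2)/(2√π Γ((d+1)/2)), independently of h; consequently ∫₀^h G(x) dx = (Γ(d/2)/(2√π Γ((d+1)/2)))·h. -/
open Real MeasureTheory Set intervalIntegral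

noncomputable def capMeasure (d : ℕ) (u : ℝ) : ℝ :=
  Real.Gamma (d/2) / (Real.sqrt Real.pi * Real.Gamma (((d:ℝ) - 1)/2))
    * ∫ s in u..1, (1 - s^2) ^ (((d:ℝ) - 3)/2)

namespace Stmt15

noncomputable def sig (α : ℝ) (v : ℝ) : ℝ := ∫ s in v..1, (1 - s^2) ^ (α - 1)

lemma integrable_base {α : ℝ} (hα : 0 < α) :
    IntervalIntegrable (fun s : ℝ => (1 - s^2) ^ (α-1)) volume 0 1 := by
  have hbase : IntervalIntegrable (fun s : ℝ => (1 - s) ^ (α-1)) volume 0 1 := by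
    have := (intervalIntegrable_rpow' (a := 0) (b := 1) (r := α - 1) (by linarith)).comp_sub_left 1
    simpa using this.symm
  set K : ℝ := max (2 ^ (α-1)) 1 with hK
  have hK1 : (1:ℝ) ≤ K := le_max_right _ _
  refine ((hbase.const_mul K)).mono_fun ?_ ?_
  · rw [Set.uIoc_of_le (zero_le_one' ℝ), ← Measure.restrict_congr_set Ioo_ae_eq_Ioc]
    refine ContinuousOn.aestronglyMeasurable ?_ measurableSet_Ioo
    intro s hs
    have : (0:ℝ) < 1 - s^2 := by nlinarith [hs.1, hs.2]
    exact ((continuous_const.sub (continuous_id.pow 2)).continuousAt.rpow_const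
      (Or.inl this.ne')).continuousWithinAt
  · rw [Filter.EventuallyLE, ae_restrict_iff' measurableSet_uIoc]
    refine Filter.Eventually.of_forall fun s hs => ?_
    rw [Set.uIoc_of_le (zero_le_one)] at hs
    obtain ⟨hs0, hs1⟩ := hs
    have h1s : (0:ℝ) ≤ 1 - s := by linarith
    have h1s' : (0:ℝ) ≤ 1 + s := by linarith
    have hfac : (1 - s^2 : ℝ) = (1-s) * (1+s) := by ring
    have hsplit : (1 - s^2 : ℝ) ^ (α-1) = (1-s)^(α-1) * (1+s)^(α-1) := by
      rw [hfac, Real.mul_rpow h1s h1s']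
    have hle : (1+s:ℝ)^(α-1) ≤ K := by
      rcases le_or_gt 0 (α-1) with hp | hp
      · exact le_trans (Real.rpow_le_rpow h1s' (by linarith) hp) (le_max_left _ _)
      · exact le_trans (Real.rpow_le_one_of_one_le_of_nonpos (by linarith) hp.le) hK1
    have hnn : (0:ℝ) ≤ (1-s)^(α-1) := Real.rpow_nonneg h1s _
    calc ‖(1 - s^2 : ℝ) ^ (α-1)‖ = (1-s)^(α-1) * (1+s)^(α-1) := by
          rw [hsplit, Real.norm_eq_abs, abs_of_nonneg (mul_nonneg hnn (Real.rpow_nonneg h1s' _))]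
      _ ≤ (1-s)^(α-1) * K := mul_le_mul_of_nonneg_left hle hnn
      _ ≤ ‖K * (1-s)^(α-1)‖ := by rw [Real.norm_eq_abs]; rw [mul_comm]; exact le_abs_self _

lemma integrable_base' {α : ℝ} (hα : 0 < α) {v : ℝ} (hv : v ∈ Icc (0:ℝ) 1) :
    IntervalIntegrable (fun s : ℝ => (1 - s^2) ^ (α-1)) volume v 1 :=
  (integrable_base hα).mono_set (by
    rw [Set.uIcc_of_le hv.2, Set.uIcc_of_le (zero_le_one' ℝ)]
    exact Icc_subset_Icc hv.1 le_rfl)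

lemma sig_continuousOn {α : ℝ} (hα : 0 < α) : ContinuousOn (sig α) (Icc 0 1) := by
  have h := intervalIntegral.continuousOn_primitive_interval_left
    (f := fun s : ℝ => (1 - s^2) ^ (α-1)) (μ := volume) (a := 0) (b := 1)
    (by
      rw [Set.uIcc_of_le (zero_le_one' ℝ), ← intervalIntegrable_iff_integrableOn_Icc_of_le
        (zero_le_one' ℝ)]
      exact integrable_base hα)
  rwa [Set.uIcc_of_le (zero_le_one' ℝ)] at h

lemma sig_one {α : ℝ} : sig α 1 = 0 := intervalIntegral.integral_same

lemma sig_hasDerivAt {α : ℝ} (hα : 0 < α) {v : ℝ} (hv : v ∈ Ioo (0:ℝ) 1) :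
    HasDerivAt (sig α) (-(1 - v^2) ^ (α-1)) v := by
  have hpos : (0:ℝ) < 1 - v^2 := by nlinarith [hv.1, hv.2]
  have hcont : ContinuousAt (fun s : ℝ => (1 - s^2) ^ (α-1)) v :=
    (continuous_const.sub (continuous_id.pow 2)).continuousAt.rpow_const (Or.inl hpos.ne')
  refine intervalIntegral.integral_hasDerivAt_left
    (integrable_base' hα ⟨hv.1.le, hv.2.le⟩) ?_ hcont
  refine ⟨Ioo (0:ℝ) 1, Ioo_mem_nhds hv.1 hv.2, ?_⟩
  refine (ContinuousOn.aestronglyMeasurable ?_ measurableSet_Ioo)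
  intro s hs
  have : (0:ℝ) < 1 - s^2 := by nlinarith [hs.1, hs.2]
  exact ((continuous_const.sub (continuous_id.pow 2)).continuousAt.rpow_const
    (Or.inl this.ne')).continuousWithinAt

lemma key_eval {α : ℝ} (hα : 0 < α) {z : ℝ} (hz0 : 0 ≤ z) (hz1 : z < 1) :
    ∫ v in (0:ℝ)..1, sig α v *
        ((1 - z*v^2) ^ (-(α+1)) + 2*(α+1)*z*v^2 * (1 - z*v^2) ^ (-(α+1)-1))
      = 1 / (2*α*(1-z)) := by
  have hbase : ∀ v ∈ Icc (0:ℝ) 1, (0:ℝ) < 1 - z*v^2 := by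
    intro v hv
    have hv2 : v^2 ≤ 1 := by nlinarith [hv.1, hv.2]
    nlinarith
  set Φ : ℝ → ℝ := fun v => sig α v * (v * (1 - z*v^2) ^ (-(α+1)))
      - (1 - v^2) ^ α * (1 - z*v^2) ^ (-α) / (2*α*(1-z)) with hΦ
  have hc0 : Continuous (fun v : ℝ => 1 - z*v^2) :=
    continuous_const.sub (continuous_const.mul (continuous_id.pow 2))
  have hc1 : ContinuousOn (fun v : ℝ => v * (1 - z*v^2) ^ (-(α+1))) (Icc 0 1) :=
    continuousOn_id.mul (hc0.continuousOn.rpow_const fun v hv => Or.inl (hbase v hv).ne')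
  have hc2 : Continuous (fun v : ℝ => (1 - v^2) ^ α) :=
    (continuous_const.sub (continuous_id.pow 2)).rpow_const fun v => Or.inr hα.le
  have hc3 : ContinuousOn (fun v : ℝ => (1 - z*v^2) ^ (-α)) (Icc 0 1) :=
    hc0.continuousOn.rpow_const fun v hv => Or.inl (hbase v hv).ne'
  have hcontΦ : ContinuousOn Φ (Icc 0 1) :=
    (((sig_continuousOn hα).mul hc1)).sub ((hc2.continuousOn.mul hc3).div_const _)
  have hint : IntervalIntegrable (fun v => sig α v *
      ((1 - z*v^2) ^ (-(α+1)) + 2*(α+1)*z*v^2 * (1 - z*v^2) ^ (-(α+1)-1))) volume 0 1 := by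
    apply ContinuousOn.intervalIntegrable
    rw [Set.uIcc_of_le (zero_le_one' ℝ)]
    refine (sig_continuousOn hα).mul ?_
    refine ContinuousOn.add
      (hc0.continuousOn.rpow_const fun v hv => Or.inl (hbase v hv).ne') ?_
    exact (continuous_const.mul (continuous_id.pow 2)).continuousOn.mul
      (hc0.continuousOn.rpow_const fun v hv => Or.inl (hbase v hv).ne')
  have hderiv : ∀ v ∈ Ioo (0:ℝ) 1, HasDerivAt Φ (sig α v *
      ((1 - z*v^2) ^ (-(α+1)) + 2*(α+1)*z*v^2 * (1 - z*v^2) ^ (-(α+1)-1))) v := by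
    intro v hv
    have hA : (0:ℝ) < 1 - v^2 := by nlinarith [hv.1, hv.2]
    have hB : (0:ℝ) < 1 - z*v^2 := hbase v ⟨hv.1.le, hv.2.le⟩
    have h1 : HasDerivAt (fun v : ℝ => 1 - z*v^2) (-(z*(2*v^1))) v :=
      ((hasDerivAt_pow 2 v).const_mul z).const_sub 1
    have h2 := h1.rpow_const (p := -(α+1)) (Or.inl hB.ne')
    have h3 := (hasDerivAt_id v).mul h2
    have h5 := (sig_hasDerivAt hα hv).mul h3
    have h6 := ((hasDerivAt_pow 2 v).const_sub 1).rpow_const (p := α) (Or.inl hA.ne')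
    have h7 := h1.rpow_const (p := -α) (Or.inl hB.ne')
    have h8 := (h6.mul h7).div_const (2*α*(1-z))
    have hΦ' := h5.sub h8
    refine HasDerivAt.congr_deriv hΦ' ?_
    symm
    simp only [Pi.mul_apply, id]
    have eA : (1 - v^2) ^ α = (1 - v^2) ^ (α-1) * (1 - v^2) := by
      have := Real.rpow_add_one hA.ne' (α-1)
      rw [show α - 1 + 1 = α by ring] at this
      exact this
    have eB : (1 - z*v^2) ^ (-α) = (1 - z*v^2) ^ (-α-1) * (1 - z*v^2) := by
      have := Real.rpow_add_one hB.ne' (-α-1)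
      rw [show -α - 1 + 1 = -α by ring] at this
      exact this
    have eB2 : (1 - z*v^2) ^ (-(α+1)) = (1 - z*v^2) ^ (-α-1) := by
      rw [show -(α+1) = -α-1 by ring]
    have eB3 : (1 - z*v^2) ^ (-(α+1)-1) = (1 - z*v^2) ^ (-α-1-1) := by
      rw [show -(α+1)-1 = -α-1-1 by ring]
    have eB4 : (1 - z*v^2) ^ (-α-1) = (1 - z*v^2) ^ (-α-1-1) * (1 - z*v^2) := by
      have := Real.rpow_add_one hB.ne' (-α-1-1)
      rw [show -α - 1 - 1 + 1 = -α-1 by ring] at this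
      exact this
    rw [eB2, eB3, eA, eB, eB4]
    have hαz : (2*α*(1-z)) ≠ 0 := by
      have : (0:ℝ) < 1 - z := by linarith
      positivity
    have hz1' : (1:ℝ) - z ≠ 0 := (by linarith : (0:ℝ) < 1 - z).ne'
    field_simp
    ring
  have heval := intervalIntegral.integral_eq_sub_of_hasDeriv_right_of_le (zero_le_one' ℝ)
    hcontΦ (fun v hv => (hderiv v hv).hasDerivWithinAt) hint
  rw [heval]
  have e1 : Φ 1 = 0 := by
    simp [hΦ, sig_one, Real.zero_rpow hα.ne']
  have e0 : Φ 0 = -(1/(2*α*(1-z))) := by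
    simp [hΦ, Real.one_rpow]
  rw [e1, e0]
  ring

lemma tanh_lt_one (x : ℝ) : Real.tanh x < 1 := by
  rw [Real.tanh_eq_sinh_div_cosh, div_lt_one (Real.cosh_pos x)]
  have h := Real.cosh_sub_sinh x
  nlinarith [Real.exp_pos (-x)]

lemma neg_one_lt_tanh (x : ℝ) : -1 < Real.tanh x := by
  have := tanh_lt_one (-x)
  rw [Real.tanh_neg] at this; linarith

lemma one_sub_tanh_sq_pos (x : ℝ) : 0 < 1 - Real.tanh x ^ 2 := by
  nlinarith [tanh_lt_one x, neg_one_lt_tanh x]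

lemma tanh_nonneg {x : ℝ} (hx : 0 ≤ x) : 0 ≤ Real.tanh x := by
  rw [Real.tanh_eq_sinh_div_cosh]
  exact div_nonneg (Real.sinh_nonneg_iff.mpr hx) (Real.cosh_pos x).le

lemma tanh_pos {x : ℝ} (hx : 0 < x) : 0 < Real.tanh x := by
  rw [Real.tanh_eq_sinh_div_cosh]
  exact div_pos (Real.sinh_pos_iff.mpr hx) (Real.cosh_pos x)

lemma tanh_mono {x y : ℝ} (hxy : x ≤ y) : Real.tanh x ≤ Real.tanh y := by
  rw [Real.tanh_eq_sinh_div_cosh, Real.tanh_eq_sinh_div_cosh,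
    div_le_div_iff₀ (Real.cosh_pos x) (Real.cosh_pos y)]
  have h := Real.sinh_nonneg_iff.mpr (sub_nonneg.mpr hxy)
  rw [Real.sinh_sub] at h
  linarith

lemma hasDerivAt_tanh (x : ℝ) : HasDerivAt Real.tanh (1 - Real.tanh x ^ 2) x := by
  have h := (Real.hasDerivAt_sinh x).div (Real.hasDerivAt_cosh x) (Real.cosh_pos x).ne'
  have hfun : Real.tanh = fun y => Real.sinh y / Real.cosh y :=
    funext fun y => Real.tanh_eq_sinh_div_cosh y
  rw [hfun]
  refine h.congr_deriv ?_
  symm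
  have hc := Real.cosh_pos x
  have hid := Real.cosh_sq_sub_sinh_sq x
  simp only
  field_simp

set_option maxHeartbeats 1000000 in
lemma B_hasDerivAt {α : ℝ} (hα : 0 < α) {t₀ : ℝ} (ht : |t₀| < 1) :
    HasDerivAt (fun t : ℝ => ∫ v in (0:ℝ)..1, sig α v * (t * (1 - t^2*v^2) ^ (-(α+1))))
      (1 / (2*α*(1 - t₀^2))) t₀ := by
  have hIoc : Set.uIoc (0:ℝ) 1 = Ioc 0 1 := uIoc_of_le (zero_le_one' ℝ)
  have hsub : Ioc (0:ℝ) 1 ⊆ Icc 0 1 := Ioc_subset_Icc_self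
  set ε : ℝ := (1 - |t₀|)/2 with hε
  have habs := abs_nonneg t₀
  have hε0 : 0 < ε := by rw [hε]; linarith
  set m : ℝ := (1 + |t₀|)/2 with hm
  have hm1 : m < 1 := by rw [hm]; linarith
  have hm0 : 0 ≤ m := by rw [hm]; linarith
  have ht₀m : |t₀| ≤ m := by rw [hm]; linarith
  have hballm : ∀ t ∈ Metric.ball t₀ ε, |t| ≤ m := by
    intro t htb
    rw [Metric.mem_ball, Real.dist_eq] at htb
    have h1 : |t| - |t₀| ≤ |t - t₀| := by
      have := abs_sub_abs_le_abs_sub t t₀; linarith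
    rw [hm]; rw [hε] at htb; linarith
  have hbase : ∀ t : ℝ, |t| ≤ m → ∀ v ∈ Icc (0:ℝ) 1, (0:ℝ) < 1 - t^2*v^2 := by
    intro t htm v hv
    have h1 : t^2 ≤ m^2 := by nlinarith [sq_abs t, abs_nonneg t]
    have h2 : v^2 ≤ 1 := by nlinarith [hv.1, hv.2]
    nlinarith [sq_nonneg t, sq_nonneg v]
  have hm2 : (0:ℝ) < 1 - m^2 := by nlinarith
  set Cst : ℝ := (1 - m^2) ^ (-(α+1)) + 2*(α+1) * (1 - m^2) ^ (-(α+1)-1) with hCst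
  have hrp : ∀ t r : ℝ, |t| ≤ m → ContinuousOn (fun v : ℝ => (1 - t^2*v^2) ^ r) (Icc 0 1) := by
    intro t r htm
    exact (continuous_const.sub (continuous_const.mul (continuous_pow 2))).continuousOn.rpow_const
      fun v hv => Or.inl (hbase t htm v hv).ne'
  have hdom := intervalIntegral.hasDerivAt_integral_of_dominated_loc_of_deriv_le
    (F := fun t v => sig α v * (t * (1 - t^2*v^2) ^ (-(α+1))))
    (F' := fun t v => sig α v *
      ((1 - t^2*v^2) ^ (-(α+1)) + 2*(α+1)*t^2*v^2 * (1 - t^2*v^2) ^ (-(α+1)-1)))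
    (x₀ := t₀) (a := 0) (b := 1) (μ := volume)
    (bound := fun v => |sig α v| * Cst) (Metric.ball_mem_nhds t₀ hε0) ?_ ?_ ?_ ?_ ?_ ?_
  · have h2 := hdom.2
    have hz1 : t₀^2 < 1 := by nlinarith [sq_abs t₀]
    rwa [key_eval hα (sq_nonneg t₀) hz1] at h2
  · -- hF_meas
    refine Filter.eventually_of_mem (Metric.ball_mem_nhds t₀ hε0) (fun t htb => ?_)
    have htm := hballm t htb
    rw [hIoc]
    refine ContinuousOn.aestronglyMeasurable ?_ measurableSet_Ioc
    exact (((sig_continuousOn hα).mono hsub)).mul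
      ((continuousOn_const.mul ((hrp t (-(α+1)) htm).mono hsub)))
  · -- hF_int
    apply ContinuousOn.intervalIntegrable
    rw [Set.uIcc_of_le (zero_le_one' ℝ)]
    exact (sig_continuousOn hα).mul (continuousOn_const.mul (hrp t₀ (-(α+1)) ht₀m))
  · -- hF'_meas
    rw [hIoc]
    refine ContinuousOn.aestronglyMeasurable ?_ measurableSet_Ioc
    refine (((sig_continuousOn hα).mono hsub)).mul (ContinuousOn.add
      ((hrp t₀ (-(α+1)) ht₀m).mono hsub) ?_)
    exact ((continuousOn_const.mul (continuous_pow 2).continuousOn)).mul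
      ((hrp t₀ (-(α+1)-1) ht₀m).mono hsub)
  · -- h_bound
    refine Filter.Eventually.of_forall fun v hv t htb => ?_
    have hvI : v ∈ Icc (0:ℝ) 1 := hsub (hIoc ▸ hv)
    have htm := hballm t htb
    have hbt : (0:ℝ) < 1 - t^2*v^2 := hbase t htm v hvI
    have hv2 : v^2 ≤ 1 := by nlinarith [hvI.1, hvI.2]
    have ht2 : t^2 ≤ m^2 := by nlinarith [sq_abs t, abs_nonneg t]
    have htv : t^2*v^2 ≤ m^2 := by nlinarith [sq_nonneg t]
    have hble : 1 - m^2 ≤ 1 - t^2*v^2 := by linarith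
    have hR1 : (1 - t^2*v^2) ^ (-(α+1)) ≤ (1 - m^2) ^ (-(α+1)) :=
      Real.rpow_le_rpow_of_nonpos hm2 hble (by linarith)
    have hR2 : (1 - t^2*v^2) ^ (-(α+1)-1) ≤ (1 - m^2) ^ (-(α+1)-1) :=
      Real.rpow_le_rpow_of_nonpos hm2 hble (by linarith)
    have hR1n : (0:ℝ) ≤ (1 - t^2*v^2) ^ (-(α+1)) := Real.rpow_nonneg hbt.le _
    have hR2n : (0:ℝ) ≤ (1 - t^2*v^2) ^ (-(α+1)-1) := Real.rpow_nonneg hbt.le _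
    have hX : (0:ℝ) ≤ (1 - t^2*v^2) ^ (-(α+1))
        + 2*(α+1)*t^2*v^2 * (1 - t^2*v^2) ^ (-(α+1)-1) := by
      have : (0:ℝ) ≤ 2*(α+1)*t^2*v^2 := by positivity
      nlinarith
    rw [norm_mul, Real.norm_eq_abs, Real.norm_eq_abs, abs_of_nonneg hX]
    refine mul_le_mul_of_nonneg_left ?_ (abs_nonneg _)
    rw [hCst]
    have hstep : 2*(α+1)*t^2*v^2 * (1 - t^2*v^2) ^ (-(α+1)-1)
        ≤ 2*(α+1) * (1 - m^2) ^ (-(α+1)-1) := by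
      have h1 : t^2*v^2 ≤ 1 := by nlinarith
      have h2 : (0:ℝ) ≤ t^2*v^2 := by positivity
      have h3 : t^2*v^2 * ((1 - t^2*v^2) ^ (-(α+1)-1)) ≤ 1 * ((1 - m^2) ^ (-(α+1)-1)) :=
        mul_le_mul h1 hR2 hR2n zero_le_one
      calc 2*(α+1)*t^2*v^2 * (1 - t^2*v^2) ^ (-(α+1)-1)
          = 2*(α+1) * (t^2*v^2 * ((1 - t^2*v^2) ^ (-(α+1)-1))) := by ring
        _ ≤ 2*(α+1) * (1 * ((1 - m^2) ^ (-(α+1)-1))) :=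
            mul_le_mul_of_nonneg_left h3 (by linarith)
        _ = 2*(α+1) * (1 - m^2) ^ (-(α+1)-1) := by ring
    linarith
  · -- bound_integrable
    apply ContinuousOn.intervalIntegrable
    rw [Set.uIcc_of_le (zero_le_one' ℝ)]
    exact ((sig_continuousOn hα).abs).mul continuousOn_const
  · -- h_diff
    refine Filter.Eventually.of_forall fun v hv t htb => ?_
    have hvI : v ∈ Icc (0:ℝ) 1 := hsub (hIoc ▸ hv)
    have hbt : (0:ℝ) < 1 - t^2*v^2 := hbase t (hballm t htb) v hvI
    have h1 : HasDerivAt (fun t : ℝ => 1 - t^2*v^2) (-(2*t^1*v^2)) t :=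
      ((hasDerivAt_pow 2 t).mul_const (v^2)).const_sub 1
    have h2 := h1.rpow_const (p := -(α+1)) (Or.inl hbt.ne')
    have h3 := (hasDerivAt_id t).mul h2
    have h4 := h3.const_mul (sig α v)
    refine h4.congr_deriv ?_
    simp only [id_eq]
    ring

lemma psi_eq {α : ℝ} (hα : 0 < α) (y : ℝ) :
    ∫ v in (0:ℝ)..1, sig α v * (Real.tanh y * (1 - Real.tanh y^2*v^2) ^ (-(α+1)))
      = y / (2*α) := by
  set ψ : ℝ → ℝ := fun y =>
    ∫ v in (0:ℝ)..1, sig α v * (Real.tanh y * (1 - Real.tanh y^2*v^2) ^ (-(α+1))) with hψdef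
  have hψ : ∀ x : ℝ, HasDerivAt ψ (1/(2*α)) x := by
    intro x
    have habs : |Real.tanh x| < 1 := abs_lt.mpr ⟨neg_one_lt_tanh x, tanh_lt_one x⟩
    have hcomp := (B_hasDerivAt hα habs).comp x (hasDerivAt_tanh x)
    have heq : (1 / (2*α*(1 - Real.tanh x^2))) * (1 - Real.tanh x ^ 2) = 1/(2*α) := by
      have hpos := one_sub_tanh_sq_pos x
      field_simp
    rw [heq] at hcomp
    exact hcomp
  have hFTC := intervalIntegral.integral_eq_sub_of_hasDerivAt
    (f := ψ) (f' := fun _ => 1/(2*α)) (a := 0) (b := y)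
    (fun x _ => hψ x) intervalIntegrable_const
  have hψ0 : ψ 0 = 0 := by simp [hψdef, Real.tanh_zero]
  rw [intervalIntegral.integral_const, hψ0, sub_zero, smul_eq_mul] at hFTC
  rw [sub_zero] at hFTC
  show ψ y = y / (2*α)
  rw [← hFTC]; ring

lemma continuous_tanh : Continuous Real.tanh :=
  continuous_iff_continuousAt.mpr fun x => (hasDerivAt_tanh x).continuousAt

set_option maxHeartbeats 1000000 in
lemma subst_eq {α : ℝ} (hα : 0 < α) (n : ℕ) (hn : (n:ℝ) = 2*α) {y : ℝ} (hy : 0 < y) :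
    ∫ x in (0:ℝ)..y, sig α (Real.tanh x / Real.tanh y) * Real.cosh x ^ n
      = ∫ v in (0:ℝ)..1, sig α v * (Real.tanh y * (1 - Real.tanh y^2*v^2) ^ (-(α+1))) := by
  set T : ℝ := Real.tanh y with hTdef
  have hT0 : 0 < T := tanh_pos hy
  have hT1 : T < 1 := tanh_lt_one y
  set g : ℝ → ℝ := fun u => sig α (u/T) * (1 - u^2) ^ (-(α+1)) with hgdef
  -- continuity of g on Icc 0 T
  have hgcont : ContinuousOn g (Icc 0 T) := by
    refine ContinuousOn.mul ?_ ?_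
    · refine (sig_continuousOn hα).comp (continuousOn_id.div_const T) ?_
      intro u hu
      exact ⟨div_nonneg hu.1 hT0.le, (div_le_one hT0).mpr hu.2⟩
    · refine (continuous_const.sub (continuous_pow 2)).continuousOn.rpow_const ?_
      intro u hu
      have h2 : u^2 ≤ T^2 := by nlinarith [hu.1, hu.2]
      have : (0:ℝ) < 1 - u^2 := by nlinarith
      exact Or.inl this.ne'
  -- pointwise rewriting of the integrand
  have hpt : ∀ x : ℝ, sig α (Real.tanh x / T) * Real.cosh x ^ n
      = (1 - Real.tanh x ^ 2) • g (Real.tanh x) := by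
    intro x
    have hc := Real.cosh_pos x
    have htsq := one_sub_tanh_sq_pos x
    have e1 : (1 - Real.tanh x ^ 2) = (Real.cosh x ^ 2)⁻¹ := by
      rw [Real.tanh_eq_sinh_div_cosh, div_pow]
      field_simp
      try nlinarith [Real.cosh_sq_sub_sinh_sq x]
    have e2 : (1 - Real.tanh x ^ 2) * (1 - Real.tanh x ^ 2) ^ (-(α+1))
        = (1 - Real.tanh x ^ 2) ^ (-α) := by
      have := Real.rpow_add_one htsq.ne' (-(α+1))
      rw [show -(α+1) + 1 = -α by ring] at this
      rw [this]; ring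
    have e3 : (1 - Real.tanh x ^ 2) ^ (-α) = Real.cosh x ^ n := by
      rw [e1, ← Real.rpow_natCast (Real.cosh x) 2, ← Real.rpow_neg_one
        ((Real.cosh x) ^ ((2:ℕ):ℝ)), ← Real.rpow_mul hc.le, ← Real.rpow_mul hc.le,
        show ((2:ℕ):ℝ) * (-1) * (-α) = (n:ℝ) by push_cast; rw [hn]; ring,
        Real.rpow_natCast]
    rw [hgdef]
    simp only [smul_eq_mul]
    rw [← e3, ← e2]
    ring
  rw [intervalIntegral.integral_congr (g := fun x => (1 - Real.tanh x ^ 2) • g (Real.tanh x))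
    (fun x _ => hpt x)]
  -- first substitution u = tanh x
  have himg1 : Real.tanh '' (Set.uIcc 0 y) ⊆ Icc 0 T := by
    rintro u ⟨x, hx, rfl⟩
    rw [Set.uIcc_of_le hy.le] at hx
    exact ⟨tanh_nonneg hx.1, tanh_mono hx.2⟩
  have hstep1 := intervalIntegral.integral_comp_smul_deriv'
    (f := Real.tanh) (f' := fun x => 1 - Real.tanh x ^ 2) (g := g) (a := 0) (b := y)
    (fun x _ => hasDerivAt_tanh x)
    ((continuous_const.sub ((continuous_tanh).pow 2)).continuousOn)
    (hgcont.mono himg1)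
  have hstep1' : ∫ x in (0:ℝ)..y, (1 - Real.tanh x ^ 2) • g (Real.tanh x)
      = ∫ u in (0:ℝ)..T, g u := by
    simpa [Real.tanh_zero] using hstep1
  rw [hstep1']
  -- second substitution u = T * v
  have himg2 : (fun v : ℝ => T*v) '' (Set.uIcc 0 1) ⊆ Icc 0 T := by
    rintro u ⟨v, hv, rfl⟩
    rw [Set.uIcc_of_le (zero_le_one' ℝ)] at hv
    refine ⟨mul_nonneg hT0.le hv.1, ?_⟩
    show T * v ≤ T
    nlinarith [hv.1, hv.2]
  have hlin : ∀ v : ℝ, HasDerivAt (fun v : ℝ => T*v) T v := by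
    intro v
    simpa using (hasDerivAt_id v).const_mul T
  have hstep2 := intervalIntegral.integral_comp_smul_deriv'
    (f := fun v : ℝ => T*v) (f' := fun _ => T) (g := g) (a := 0) (b := 1)
    (fun v _ => hlin v) continuousOn_const (hgcont.mono himg2)
  have hstep2' : ∫ v in (0:ℝ)..1, T • g (T*v) = ∫ u in (0:ℝ)..T, g u := by
    simpa using hstep2
  rw [← hstep2']
  refine intervalIntegral.integral_congr fun v _ => ?_
  simp only [hgdef, smul_eq_mul, Function.comp]
  rw [mul_div_cancel_left₀ v hT0.ne', mul_pow]
  ring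

end Stmt15

open Stmt15

theorem stmt15 (d : ℕ) (hd : 2 ≤ d) (h : ℝ) (hh : 0 < h) :
    HasDerivAt
      (fun h' : ℝ => ∫ x in (0:ℝ)..h',
          capMeasure d (Real.tanh x / Real.tanh h') * Real.cosh x ^ (d-1))
      (Real.Gamma (d/2) / (2 * Real.sqrt Real.pi * Real.Gamma (((d:ℝ) + 1)/2))) h ∧
    (∫ x in (0:ℝ)..h, capMeasure d (Real.tanh x / Real.tanh h) * Real.cosh x ^ (d-1))
      = Real.Gamma (d/2) / (2 * Real.sqrt Real.pi * Real.Gamma (((d:ℝ) + 1)/2)) * h := by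
  have hd2 : (2:ℝ) ≤ (d:ℝ) := by exact_mod_cast hd
  set α : ℝ := ((d:ℝ) - 1)/2 with hαdef
  have hα : 0 < α := by rw [hαdef]; linarith
  have hn : ((d - 1 : ℕ) : ℝ) = 2 * α := by
    rw [Nat.cast_sub (by omega : 1 ≤ d), hαdef]
    push_cast; ring
  set c : ℝ := Real.Gamma (d/2) / (Real.sqrt Real.pi * Real.Gamma (((d:ℝ) - 1)/2)) with hcdef
  set C : ℝ := Real.Gamma (d/2) / (2 * Real.sqrt Real.pi * Real.Gamma (((d:ℝ) + 1)/2)) with hCdef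
  have hcap : ∀ u : ℝ, capMeasure d u = c * sig α u := by
    intro u
    have hexp : ((d:ℝ) - 3)/2 = α - 1 := by rw [hαdef]; ring
    rw [capMeasure, sig, hexp, hcdef]
  have hcC : c * (1 / (2*α)) = C := by
    have hgam : Real.Gamma (((d:ℝ) + 1)/2) = α * Real.Gamma α := by
      have e : ((d:ℝ) + 1)/2 = α + 1 := by rw [hαdef]; ring
      rw [e, Real.Gamma_add_one hα.ne']
    have hgpos : 0 < Real.Gamma α := Real.Gamma_pos_of_pos hα
    have hsq : 0 < Real.sqrt Real.pi := Real.sqrt_pos.mpr Real.pi_pos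
    rw [hcdef, hCdef, hgam, show ((d:ℝ) - 1)/2 = α from hαdef.symm]
    rw [div_mul_div_comm, mul_one]
    rw [div_eq_div_iff
      (by positivity : (Real.sqrt Real.pi * Real.Gamma α * (2*α)) ≠ 0)
      (by positivity : (2 * Real.sqrt Real.pi * (α * Real.Gamma α)) ≠ 0)]
    ring
  have hkey : ∀ y : ℝ, 0 < y →
      (∫ x in (0:ℝ)..y, capMeasure d (Real.tanh x / Real.tanh y) * Real.cosh x ^ (d-1))
        = C * y := by
    intro y hy
    have e1 : (∫ x in (0:ℝ)..y, capMeasure d (Real.tanh x / Real.tanh y) * Real.cosh x ^ (d-1))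
        = c * ∫ x in (0:ℝ)..y, sig α (Real.tanh x / Real.tanh y) * Real.cosh x ^ (d-1) := by
      rw [← intervalIntegral.integral_const_mul]
      refine intervalIntegral.integral_congr fun x _ => ?_
      rw [hcap, mul_assoc]
    rw [e1, subst_eq hα (d-1) hn hy, psi_eq hα y]
    rw [← hcC]
    ring
  refine ⟨?_, by rw [hkey h hh]⟩
  have hEq : (fun h' : ℝ => ∫ x in (0:ℝ)..h',
      capMeasure d (Real.tanh x / Real.tanh h') * Real.cosh x ^ (d-1))
      =ᶠ[nhds h] (fun h' : ℝ => C * h') := by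
    filter_upwards [Ioi_mem_nhds hh] with y hy
    exact hkey y hy
  have hlin : HasDerivAt (fun h' : ℝ => C * h') C h := by
    simpa using (hasDerivAt_id h).const_mul C
  exact hlin.congr_of_eventuallyEq hEq
end

section
/- If X is exponentially distributed with rate a > d-1 (d ≥ 2 an integer), and V := (2π^{d/2}/Γ(d/2)) ∫₀^X sinh^{d-1}(s) ds, then E[V] = π^{(d-1)/2} Γ((d+1)/2) · Γ((a-d+1)/2)/Γ((a+d+1)/2). -/
open MeasureTheory Real Set Filter Topology Finset
open scoped Nat

-- ∫ exp(-(c x)) on Ioi 0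
lemma myexp_int {c : ℝ} (hc : 0 < c) :
    ∫ x in Ioi (0:ℝ), Real.exp (-(c*x)) = 1/c := by
  have hderiv : ∀ x ∈ Ici (0:ℝ),
      HasDerivAt (fun x => -Real.exp (-(c*x))/c) (Real.exp (-(c*x))) x := by
    intro x _
    have h1 : HasDerivAt (fun x : ℝ => -(c*x)) (-c) x := by
      simpa using ((hasDerivAt_id x).const_mul c).fun_neg
    have h2 := (Real.hasDerivAt_exp (-(c*x))).comp x h1
    have h3 := (h2.neg).div_const c
    refine h3.congr_deriv ?_
    field_simp
  have hint : IntegrableOn (fun x => Real.exp (-(c*x))) (Ioi (0:ℝ)) := by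
    simpa [neg_mul] using exp_neg_integrableOn_Ioi 0 hc
  have htend : Tendsto (fun x => -Real.exp (-(c*x))/c) atTop (𝓝 0) := by
    have h1 : Tendsto (fun x : ℝ => c * x) atTop atTop :=
      Tendsto.const_mul_atTop hc tendsto_id
    have h2 : Tendsto (fun x : ℝ => Real.exp (-(c*x))) atTop (𝓝 0) :=
      Real.tendsto_exp_neg_atTop_nhds_zero.comp h1
    simpa using (h2.neg).div_const c
  have := integral_Ioi_of_hasDerivAt_of_tendsto' hderiv hint htend
  simp only [mul_zero, neg_zero, Real.exp_zero] at this
  rw [this]; ring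

lemma mysum_inv (n : ℕ) : ∀ y : ℝ, 0 < y →
    ∑ j ∈ Finset.range (n+1), (-1:ℝ)^j * (n.choose j) / (y + j)
      = (n ! : ℝ) / ∏ j ∈ Finset.range (n+1), (y + j) := by
  induction n with
  | zero => intro y hy; simp
  | succ n ih =>
    intro y hy
    have hy1 : (0:ℝ) < y + 1 := by linarith
    have key : ∑ j ∈ Finset.range (n+2), (-1:ℝ)^j * ((n+1).choose j) / (y + j)
        = (∑ j ∈ Finset.range (n+1), (-1:ℝ)^j * (n.choose j) / (y + j))
          - ∑ j ∈ Finset.range (n+1), (-1:ℝ)^j * (n.choose j) / ((y+1) + j) := by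
      rw [Finset.sum_range_succ' (fun j => (-1:ℝ)^j * ((n+1).choose j) / (y + j)) (n+1)]
      have h1 : ∀ i ∈ Finset.range (n+1),
          (-1:ℝ)^(i+1) * ((n+1).choose (i+1)) / (y + ((i+1 : ℕ) : ℝ))
          = (-1:ℝ)^(i+1) * (n.choose (i+1)) / (y + ((i:ℝ)+1))
            - (-1:ℝ)^i * (n.choose i) / ((y+1) + i) := by
        intro i _
        rw [Nat.choose_succ_succ]
        push_cast
        have h2 : (y:ℝ) + (↑i + 1) ≠ 0 := by positivity
        have h2' : (y:ℝ) + 1 + ↑i ≠ 0 := by positivity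
        field_simp
        ring
      rw [Finset.sum_congr rfl h1, Finset.sum_sub_distrib]
      have h3 : ∑ i ∈ Finset.range (n+1), (-1:ℝ)^(i+1) * (n.choose (i+1)) / (y + ((i:ℝ)+1))
          = (∑ j ∈ Finset.range (n+1), (-1:ℝ)^j * (n.choose j) / (y + j))
            - (-1:ℝ)^0 * (n.choose 0) / (y + 0) := by
        have h4 := Finset.sum_range_succ' (fun j => (-1:ℝ)^j * (n.choose j) / (y + j)) (n+1)
        have h5 : ∑ j ∈ Finset.range (n+1+1), (-1:ℝ)^j * (n.choose j) / (y + j)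
            = ∑ j ∈ Finset.range (n+1), (-1:ℝ)^j * (n.choose j) / (y + j) := by
          rw [Finset.sum_range_succ]
          simp [Nat.choose_succ_self]
        rw [h5] at h4
        push_cast at h4 ⊢
        linarith [h4]
      push_cast at h3 ⊢
      rw [h3]
      simp only [Nat.choose_zero_right, Nat.cast_one, pow_zero]
      ring
    rw [key, ih y hy, ih (y+1) hy1]
    set P := ∏ j ∈ Finset.range (n+1), (y + (j:ℝ)) with hP
    set Q := ∏ j ∈ Finset.range (n+1), ((y+1) + (j:ℝ)) with hQ
    have hPpos : 0 < P := Finset.prod_pos fun j _ => by positivity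
    have hQpos : 0 < Q := Finset.prod_pos fun j _ => by positivity
    have e1 : ∏ j ∈ Finset.range (n+2), (y + (j:ℝ)) = P * (y + (n+1)) := by
      rw [Finset.prod_range_succ]; push_cast; ring
    have e2 : ∏ j ∈ Finset.range (n+2), (y + (j:ℝ)) = y * Q := by
      rw [Finset.prod_range_succ' (fun j => y + (j:ℝ)) (n+1)]
      have h6 : (∏ x ∈ Finset.range (n+1), (y + ((x+1 : ℕ) : ℝ))) = Q :=
        Finset.prod_congr rfl fun j _ => by push_cast; ring
      rw [h6]
      norm_num [mul_comm]
    have hRpos : 0 < ∏ j ∈ Finset.range (n+2), (y + (j:ℝ)) :=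
      Finset.prod_pos fun j _ => by positivity
    rw [eq_div_iff hRpos.ne', sub_mul]
    have c1 : (n ! : ℝ) / P * (∏ j ∈ Finset.range (n+2), (y + (j:ℝ))) = (n ! : ℝ) * (y + n + 1) := by
      rw [e1]; field_simp; ring
    have c2 : (n ! : ℝ) / Q * (∏ j ∈ Finset.range (n+2), (y + (j:ℝ))) = (n ! : ℝ) * y := by
      rw [e2]; field_simp
    rw [c1, c2, Nat.factorial_succ]
    push_cast
    ring

lemma mygamma_prod (n : ℕ) : ∀ y : ℝ, 0 < y →
    Real.Gamma (y + (n+1)) = (∏ j ∈ Finset.range (n+1), (y + j)) * Real.Gamma y := by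
  induction n with
  | zero =>
    intro y hy
    have := Real.Gamma_add_one hy.ne'
    simpa using this
  | succ n ih =>
    intro y hy
    have hpos : (0:ℝ) < y + ((n:ℝ)+1) := by positivity
    have e : y + (((n+1:ℕ)):ℝ) + 1 = (y + ((n:ℝ)+1)) + 1 := by push_cast; ring
    rw [Finset.prod_range_succ]
    rw [show y + ((((n+1:ℕ)):ℝ) + 1) = (y + ((n:ℝ)+1)) + 1 by push_cast; ring]
    rw [Real.Gamma_add_one hpos.ne', ih y hy]
    push_cast
    ring

lemma mypointwise (n : ℕ) (a s : ℝ) :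
    Real.sinh s ^ n * Real.exp (-(a*s))
      = ∑ k ∈ Finset.range (n+1),
          ((-1:ℝ)^k * (n.choose k) / 2^n) * Real.exp (-((a - n + 2*k)*s)) := by
  rw [Real.sinh_eq, sub_eq_neg_add, div_pow, add_pow, Finset.sum_div, Finset.sum_mul]
  refine Finset.sum_congr rfl fun k hk => ?_
  have hk' : k ≤ n := Nat.lt_succ_iff.mp (Finset.mem_range.mp hk)
  rw [neg_pow, ← Real.exp_nat_mul, ← Real.exp_nat_mul]
  have hcast : ((n - k : ℕ) : ℝ) = (n : ℝ) - k := by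
    rw [Nat.cast_sub hk']
  rw [hcast]
  rw [show ((-1:ℝ))^k * Real.exp (↑k * -s) * Real.exp (((n:ℝ) - k) * s) * ↑(n.choose k) / 2^n
      * Real.exp (-(a*s))
      = ((-1:ℝ)^k * (n.choose k) / 2^n)
        * (Real.exp (↑k * -s) * Real.exp (((n:ℝ) - k) * s) * Real.exp (-(a*s))) by ring]
  rw [← Real.exp_add, ← Real.exp_add]
  congr 2
  ring

lemma myterm_integrable (n : ℕ) (a : ℝ) (ha : (n:ℝ) < a) (k : ℕ) (hk : k ∈ Finset.range (n+1)) :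
    IntegrableOn (fun s => ((-1:ℝ)^k * (n.choose k) / 2^n) * Real.exp (-((a - n + 2*k)*s)))
      (Ioi (0:ℝ)) := by
  have hr : 0 < a - n + 2*k := by
    have : (0:ℝ) ≤ (k:ℝ) := Nat.cast_nonneg k
    linarith
  have h := (exp_neg_integrableOn_Ioi 0 hr).const_mul ((-1:ℝ)^k * (n.choose k) / 2^n)
  have he : (fun s => ((-1:ℝ)^k * (n.choose k) / 2^n) * Real.exp (-((a - n + 2*k)*s)))
      = fun s => ((-1:ℝ)^k * (n.choose k) / 2^n) * Real.exp (-(a - n + 2*k)*s) := by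
    funext s; rw [neg_mul]
  rw [he]
  exact h

lemma my_sinh_integrable (n : ℕ) (a : ℝ) (ha : (n:ℝ) < a) :
    IntegrableOn (fun s => Real.sinh s ^ n * Real.exp (-(a*s))) (Ioi (0:ℝ)) := by
  have : (fun s => Real.sinh s ^ n * Real.exp (-(a*s)))
      = fun s => ∑ k ∈ Finset.range (n+1),
          ((-1:ℝ)^k * (n.choose k) / 2^n) * Real.exp (-((a - n + 2*k)*s)) := by
    funext s; exact mypointwise n a s
  rw [this]
  exact integrable_finset_sum _ (fun k hk => myterm_integrable n a ha k hk)

lemma myJ (n : ℕ) (a : ℝ) (ha : (n:ℝ) < a) :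
    ∫ s in Ioi (0:ℝ), Real.sinh s ^ n * Real.exp (-(a*s))
      = ∑ k ∈ Finset.range (n+1),
          ((-1:ℝ)^k * (n.choose k) / 2^(n+1)) * (1/((a-n)/2 + k)) := by
  rw [show (fun s => Real.sinh s ^ n * Real.exp (-(a*s)))
      = fun s => ∑ k ∈ Finset.range (n+1),
          ((-1:ℝ)^k * (n.choose k) / 2^n) * Real.exp (-((a - n + 2*k)*s)) from
    funext fun s => mypointwise n a s]
  rw [MeasureTheory.integral_finset_sum _ (fun k hk => myterm_integrable n a ha k hk)]
  refine Finset.sum_congr rfl fun k hk => ?_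
  have hr : 0 < a - n + 2*k := by
    have : (0:ℝ) ≤ (k:ℝ) := Nat.cast_nonneg k
    linarith
  rw [MeasureTheory.integral_const_mul, myexp_int hr]
  rw [show (a - n)/2 + k = (a - n + 2*k)/2 by ring]
  rw [pow_succ]
  field_simp




lemma myJGamma (n : ℕ) (a : ℝ) (ha : (n:ℝ) < a) :
    ∫ s in Ioi (0:ℝ), Real.sinh s ^ n * Real.exp (-(a*s))
      = (n ! : ℝ) * Real.Gamma ((a-n)/2) / (2^(n+1) * Real.Gamma ((a-n)/2 + (n+1))) := by
  have hy : 0 < (a-(n:ℝ))/2 := by linarith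
  rw [myJ n a ha]
  have e : ∑ k ∈ Finset.range (n+1), ((-1:ℝ)^k * (n.choose k) / 2^(n+1)) * (1/((a-n)/2 + k))
      = (∑ k ∈ Finset.range (n+1), (-1:ℝ)^k * (n.choose k) / ((a-n)/2 + k)) / 2^(n+1) := by
    rw [Finset.sum_div]
    exact Finset.sum_congr rfl fun k _ => by ring
  rw [e, mysum_inv n _ hy, mygamma_prod n _ hy, div_div]
  have hP : 0 < ∏ j ∈ Finset.range (n+1), ((a-(n:ℝ))/2 + j) :=
    Finset.prod_pos fun j _ => by positivity
  have hG : 0 < Real.Gamma ((a-(n:ℝ))/2) := Real.Gamma_pos_of_pos hy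
  rw [div_eq_div_iff (by positivity) (by positivity)]
  ring

lemma myexp_measure_integral (a : ℝ) (ha : 0 < a) (g : ℝ → ℝ) :
    ∫ x, g x ∂(ProbabilityTheory.expMeasure a)
      = ∫ x in Ioi (0:ℝ), (a * Real.exp (-(a*x))) * g x := by
  rw [ProbabilityTheory.expMeasure, ProbabilityTheory.gammaMeasure]
  have hmeas : Measurable fun x => (ProbabilityTheory.gammaPDFReal 1 a x).toNNReal :=
    (ProbabilityTheory.measurable_gammaPDFReal 1 a).real_toNNReal
  have hd : (ProbabilityTheory.gammaPDF 1 a)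
      = fun x => ((ProbabilityTheory.gammaPDFReal 1 a x).toNNReal : ENNReal) := rfl
  rw [hd, integral_withDensity_eq_integral_smul hmeas]
  have key : (fun x => (ProbabilityTheory.gammaPDFReal 1 a x).toNNReal • g x)
      = Set.indicator (Ici (0:ℝ)) (fun x => (a * Real.exp (-(a*x))) * g x) := by
    funext x
    by_cases hx : (0:ℝ) ≤ x
    · rw [Set.indicator_of_mem (Set.mem_Ici.mpr hx)]
      have hpdf : ProbabilityTheory.gammaPDFReal 1 a x = a * Real.exp (-(a*x)) := by
        simp [ProbabilityTheory.gammaPDFReal, hx, Real.Gamma_one, Real.rpow_one, sub_self,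
          Real.rpow_zero]
      rw [NNReal.smul_def, smul_eq_mul, hpdf]
      congr 1
      rw [Real.coe_toNNReal]
      positivity
    · rw [Set.indicator_of_notMem (by simpa using hx)]
      have hpdf : ProbabilityTheory.gammaPDFReal 1 a x = 0 := by
        simp [ProbabilityTheory.gammaPDFReal, hx]
      rw [NNReal.smul_def, smul_eq_mul, hpdf]
      simp
  rw [key, integral_indicator measurableSet_Ici, integral_Ici_eq_integral_Ioi]


lemma mytail (n : ℕ) (hn : 1 ≤ n) (a : ℝ) (ha : (n:ℝ) < a) :
    ∫ x in Ioi (0:ℝ), (a * Real.exp (-(a*x))) * (∫ s in (0:ℝ)..x, Real.sinh s ^ n)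
      = ∫ s in Ioi (0:ℝ), Real.sinh s ^ n * Real.exp (-(a*s)) := by
  have ha0 : 0 < a := lt_of_le_of_lt (by exact_mod_cast Nat.cast_nonneg n) ha
  have hn0 : (0:ℝ) < n := by exact_mod_cast hn
  have hcontf : Continuous fun s : ℝ => Real.sinh s ^ n := Real.continuous_sinh.pow n
  set F : ℝ → ℝ := fun x => ∫ s in (0:ℝ)..x, Real.sinh s ^ n with hF
  have hFderiv : ∀ x : ℝ, HasDerivAt F (Real.sinh x ^ n) x := by
    intro x
    exact intervalIntegral.integral_hasDerivAt_right
      (hcontf.intervalIntegrable 0 x)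
      (hcontf.stronglyMeasurableAtFilter volume (𝓝 x))
      hcontf.continuousAt
  have hFcont : Continuous F := by
    rw [continuous_iff_continuousAt]
    exact fun x => (hFderiv x).continuousAt
  have hFnonneg : ∀ x : ℝ, 0 ≤ x → 0 ≤ F x := by
    intro x hx
    apply intervalIntegral.integral_nonneg hx
    intro s hs
    exact pow_nonneg (Real.sinh_nonneg_iff.mpr hs.1) n
  have hFbound : ∀ x : ℝ, 0 ≤ x → F x ≤ Real.exp (n*x) / (n * 2^n) := by
    intro x hx
    have step1 : F x ≤ ∫ s in (0:ℝ)..x, Real.exp (n*s) / 2^n := by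
      apply intervalIntegral.integral_mono_on hx (hcontf.intervalIntegrable 0 x)
        (((Real.continuous_exp.comp (continuous_const.mul continuous_id)).div_const
          _).intervalIntegrable 0 x)
      intro s hs
      have h1 : 0 ≤ Real.sinh s := Real.sinh_nonneg_iff.mpr hs.1
      have h2 : Real.sinh s ≤ Real.exp s / 2 := by
        rw [Real.sinh_eq]
        have := Real.exp_pos (-s)
        linarith
      calc Real.sinh s ^ n ≤ (Real.exp s / 2)^n := pow_le_pow_left₀ h1 h2 n
        _ = Real.exp (n*s) / 2^n := by
            rw [div_pow, ← Real.exp_nat_mul]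
    have step2 : ∫ s in (0:ℝ)..x, Real.exp (n*s) / 2^n
        = (Real.exp (n*x) - 1) / (n * 2^n) := by
      have hasd : ∀ s ∈ Set.uIcc (0:ℝ) x, HasDerivAt (fun s => Real.exp (n*s) / (n * 2^n))
          (Real.exp (n*s) / 2^n) s := by
        intro s _
        have h1 : HasDerivAt (fun s : ℝ => (n:ℝ)*s) (n:ℝ) s := by
          simpa using (hasDerivAt_id s).const_mul (n:ℝ)
        have h2 := ((Real.hasDerivAt_exp ((n:ℝ)*s)).comp s h1).div_const ((n:ℝ) * 2^n)
        refine h2.congr_deriv ?_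
        field_simp
      have := intervalIntegral.integral_eq_sub_of_hasDerivAt hasd
        (((Real.continuous_exp.comp (continuous_const.mul continuous_id)).div_const
          _).intervalIntegrable 0 x)
      rw [this]
      rw [mul_zero, Real.exp_zero]
      ring
    calc F x ≤ ∫ s in (0:ℝ)..x, Real.exp (n*s) / 2^n := step1
      _ = (Real.exp (n*x) - 1) / (n * 2^n) := step2
      _ ≤ Real.exp (n*x) / (n * 2^n) := by
          gcongr
          linarith
  set G : ℝ → ℝ := fun x => -(F x) * Real.exp (-(a*x)) with hG
  have hGderiv : ∀ x : ℝ, HasDerivAt G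
      (a * F x * Real.exp (-(a*x)) - Real.sinh x ^ n * Real.exp (-(a*x))) x := by
    intro x
    have h1 : HasDerivAt (fun x : ℝ => -(a*x)) (-a) x := by
      simpa using ((hasDerivAt_id x).const_mul a).fun_neg
    have h2 : HasDerivAt (fun x : ℝ => Real.exp (-(a*x))) (-a * Real.exp (-(a*x))) x := by
      have := (Real.hasDerivAt_exp (-(a*x))).comp x h1
      refine this.congr_deriv ?_
      ring
    have h3 := ((hFderiv x).neg).mul h2
    refine h3.congr_deriv ?_
    simp only [Pi.neg_apply]
    ring
  have hGtend : Tendsto G atTop (𝓝 0) := by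
    have hlow : Tendsto (fun x : ℝ => -(Real.exp (-((a-(n:ℝ))*x)) / ((n:ℝ) * 2^n)))
        atTop (𝓝 0) := by
      have h1 : Tendsto (fun x : ℝ => (a-(n:ℝ)) * x) atTop atTop :=
        Tendsto.const_mul_atTop (by linarith) tendsto_id
      have h2 : Tendsto (fun x : ℝ => Real.exp (-((a-(n:ℝ))*x))) atTop (𝓝 0) :=
        Real.tendsto_exp_neg_atTop_nhds_zero.comp h1
      have h3 := (h2.div_const ((n:ℝ) * 2^n)).neg
      norm_num at h3
      exact h3
    apply tendsto_of_tendsto_of_tendsto_of_le_of_le' hlow tendsto_const_nhds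
    · filter_upwards [eventually_ge_atTop (0:ℝ)] with x hx
      have hb := hFbound x hx
      have hFpos := hFnonneg x hx
      have hexp : (0:ℝ) < Real.exp (-(a*x)) := Real.exp_pos _
      have : F x * Real.exp (-(a*x)) ≤ Real.exp ((n:ℝ)*x) / ((n:ℝ) * 2^n) * Real.exp (-(a*x)) := by
        gcongr
      have heq : Real.exp ((n:ℝ)*x) / ((n:ℝ) * 2^n) * Real.exp (-(a*x))
          = Real.exp (-((a-(n:ℝ))*x)) / ((n:ℝ) * 2^n) := by
        rw [div_mul_eq_mul_div, ← Real.exp_add]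
        ring_nf
      rw [heq] at this
      simp only [hG]
      rw [neg_mul]
      linarith
    · filter_upwards [eventually_ge_atTop (0:ℝ)] with x hx
      have hFpos := hFnonneg x hx
      have hexp : (0:ℝ) < Real.exp (-(a*x)) := Real.exp_pos _
      simp only [hG]
      nlinarith
  have hint2 : IntegrableOn (fun s => Real.sinh s ^ n * Real.exp (-(a*s))) (Ioi (0:ℝ)) :=
    my_sinh_integrable n a ha
  have hint1 : IntegrableOn (fun x => a * F x * Real.exp (-(a*x))) (Ioi (0:ℝ)) := by
    have hbound : IntegrableOn
        (fun x => a / ((n:ℝ) * 2^n) * Real.exp (-((a-(n:ℝ))*x))) (Ioi (0:ℝ)) := by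
      have h := (exp_neg_integrableOn_Ioi 0 (show (0:ℝ) < a - n by linarith)).const_mul
        (a / ((n:ℝ) * 2^n))
      have he : (fun x => a / ((n:ℝ) * 2^n) * Real.exp (-((a-(n:ℝ))*x)))
          = fun x => a / ((n:ℝ) * 2^n) * Real.exp (-(a-(n:ℝ))*x) := by
        funext x; rw [neg_mul]
      rw [he]; exact h
    apply Integrable.mono' hbound
    · exact ((continuous_const.mul hFcont).mul
        (Real.continuous_exp.comp (continuous_const.mul continuous_id).neg)).aestronglyMeasurable
    · filter_upwards [ae_restrict_mem measurableSet_Ioi] with x hx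
      have hx0 : (0:ℝ) ≤ x := le_of_lt hx
      have hb := hFbound x hx0
      have hFpos := hFnonneg x hx0
      have hexp : (0:ℝ) < Real.exp (-(a*x)) := Real.exp_pos _
      rw [Real.norm_eq_abs, abs_of_nonneg (by positivity)]
      have h1 : a * F x * Real.exp (-(a*x))
          ≤ a * (Real.exp ((n:ℝ)*x) / ((n:ℝ) * 2^n)) * Real.exp (-(a*x)) := by
        gcongr
      have hee : Real.exp ((n:ℝ)*x) * Real.exp (-(a*x)) = Real.exp (-((a-(n:ℝ))*x)) := by
        rw [← Real.exp_add]; ring_nf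
      have heq : a * (Real.exp ((n:ℝ)*x) / ((n:ℝ) * 2^n)) * Real.exp (-(a*x))
          = a / ((n:ℝ) * 2^n) * Real.exp (-((a-(n:ℝ))*x)) := by
        rw [← hee]; ring
      linarith [h1.trans_eq heq]
  have hG'int : IntegrableOn
      (fun x => a * F x * Real.exp (-(a*x)) - Real.sinh x ^ n * Real.exp (-(a*x)))
      (Ioi (0:ℝ)) := hint1.sub hint2
  have hFTC := integral_Ioi_of_hasDerivAt_of_tendsto'
    (fun x _ => hGderiv x) hG'int hGtend
  have hG0 : G 0 = 0 := by
    simp [hG, hF, intervalIntegral.integral_same]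
  rw [hG0, sub_zero] at hFTC
  rw [MeasureTheory.integral_sub hint1 hint2] at hFTC
  have hmain : ∫ x in Ioi (0:ℝ), a * F x * Real.exp (-(a*x))
      = ∫ s in Ioi (0:ℝ), Real.sinh s ^ n * Real.exp (-(a*s)) := by
    linarith [hFTC]
  rw [← hmain]
  apply MeasureTheory.integral_congr_ae
  filter_upwards with x
  ring




theorem stmt19 (d : ℕ) (hd : 2 ≤ d) (a : ℝ) (ha : (d:ℝ) - 1 < a) :
    (∫ x, (2 * Real.pi ^ ((d:ℝ)/2) / Real.Gamma (d/2)
            * ∫ s in (0:ℝ)..x, Real.sinh s ^ (d-1))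
        ∂(ProbabilityTheory.expMeasure a))
      = Real.pi ^ (((d:ℝ) - 1)/2) * Real.Gamma (((d:ℝ) + 1)/2)
          * Real.Gamma ((a - d + 1)/2) / Real.Gamma ((a + d + 1)/2) := by
  obtain ⟨k, rfl⟩ : ∃ k, d = k + 2 := ⟨d - 2, by omega⟩
  have hsub : (k + 2) - 1 = k + 1 := rfl
  have hn' : ((k+1 : ℕ):ℝ) < a := by push_cast at ha ⊢; linarith
  have ha0 : 0 < a := lt_of_le_of_lt (by positivity) hn'
  set C := 2 * Real.pi ^ (((k+2:ℕ):ℝ)/2) / Real.Gamma (((k+2:ℕ):ℝ)/2) with hC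
  rw [hsub]
  rw [myexp_measure_integral a ha0]
  have hpull : ∫ x in Ioi (0:ℝ), (a * Real.exp (-(a*x)))
        * (C * ∫ s in (0:ℝ)..x, Real.sinh s ^ (k+1))
      = C * ∫ x in Ioi (0:ℝ), (a * Real.exp (-(a*x)))
        * (∫ s in (0:ℝ)..x, Real.sinh s ^ (k+1)) := by
    rw [← MeasureTheory.integral_const_mul]
    apply MeasureTheory.integral_congr_ae
    filter_upwards with x
    ring
  rw [hpull, mytail (k+1) (by omega) a hn', myJGamma (k+1) a hn']
  -- now pure algebra with Gamma values
  set D := ((k+2:ℕ):ℝ) with hD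
  have hDval : D = (k:ℝ) + 2 := by rw [hD]; push_cast; ring
  have dup := Real.Gamma_mul_Gamma_add_half (D/2)
  have h2D : 2 * (D/2) = D := by ring
  have hGD : Real.Gamma D = ((k+1)! : ℝ) := by
    rw [show D = ((k+1:ℕ):ℝ) + 1 by rw [hDval]; push_cast; ring]
    exact Real.Gamma_nat_eq_factorial (k+1)
  have hpow : (2:ℝ) ^ ((1:ℝ) - D) = ((2:ℝ)^(k+1))⁻¹ := by
    rw [show (1 : ℝ) - D = -((k+1:ℕ):ℝ) by rw [hDval]; push_cast; ring]
    rw [Real.rpow_neg (by norm_num), Real.rpow_natCast]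
  rw [h2D, hGD] at dup
  rw [hpow] at dup
  have dup2 : Real.Gamma (D/2) * Real.Gamma ((D+1)/2) * 2^(k+1) = ((k+1)! : ℝ) * Real.sqrt π := by
    rw [show (D+1)/2 = D/2 + 1/2 by ring, dup]
    field_simp
  have hy : (a - ((k+1:ℕ):ℝ))/2 = (a - D + 1)/2 := by rw [hDval]; push_cast; ring
  have hz : (a - D + 1)/2 + ((((k+1:ℕ)):ℝ) + 1) = (a + D + 1)/2 := by
    rw [hDval]; push_cast; ring
  rw [hy, hz]
  have hpi : Real.pi ^ (D/2) = Real.pi ^ ((D-1)/2) * Real.sqrt π := by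
    rw [Real.sqrt_eq_rpow, ← Real.rpow_add Real.pi_pos]
    congr 1
    ring
  have hGDpos : 0 < Real.Gamma (D/2) := Real.Gamma_pos_of_pos (by rw [hDval]; positivity)
  have hzpos : 0 < Real.Gamma ((a + D + 1)/2) :=
    Real.Gamma_pos_of_pos (by rw [hDval]; push_cast at hn'; positivity)
  rw [hC, hpi]
  field_simp
  linear_combination ((-2 : ℝ) * Real.Gamma ((a-D+1)/2)) * dup2
end
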